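/- For a rooted symmetric tree with all k_i ≥ 1 and r even with 2 ≤ r ≤ q, and any admissible sequence (x_1,...,x_{r-1}), the value (k_1 - x_1)h_2 - x_2 h_3 - ... - x_{r-1} h_r - (r-2)/2 is strictly positive and at most k_1 h_2 = h_1 - 1. -/

import Mathlib

/-- The `i`-th level vertex size of a rooted symmetric tree with `q` levels and
daughter degree sequence `k 1, …, k (q-1)`:
`h i = 1 + ∑_{j=i}^{q-1} k i * k (i+1) * ⋯ * k j`, so `h q = 1`. -/
def hlvl (q : ℕ) (k : ℕ → ℕ) (i : ℕ) : ℕ :=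
  1 + ∑ j ∈ Finset.Icc i (q - 1), ∏ t ∈ Finset.Icc i j, k t

/-
The labels are bounded below by replacing each `x i` with its maximum `k i - 1`, and the
recursion `h i = 1 + k i * h (i+1)` makes the resulting sum telescope:
`∑_{i=2}^{r-1} (k i - 1) h (i+1) = h 2 - h r - (r - 2)`. What remains is at least
`h r + (r - 2) - (r - 2)/2 ≥ 1`.
-/

open Finset

section

variable (q : ℕ) (k : ℕ → ℕ)

lemma one_le_hlvl (i : ℕ) : 1 ≤ hlvl q k i := Nat.le_add_right 1 _

lemma hlvl_eq_one_add_mul {i : ℕ} (hi : i < q) : hlvl q k i = 1 + k i * hlvl q k (i + 1) := by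
  have prod_Icc_eq_mul (j : ℕ) (hj : j ∈ Icc (i + 1) (q - 1)) :
      ∏ t ∈ Icc i j, k t = k i * ∏ t ∈ Icc (i + 1) j, k t := by
    rw [← insert_Icc_add_one_left_eq_Icc (i.le_succ.trans (mem_Icc.1 hj).1), prod_insert (by simp)]
  rw [hlvl, hlvl, ← insert_Icc_add_one_left_eq_Icc (by omega), sum_insert (by simp),
    sum_congr rfl prod_Icc_eq_mul, ← mul_sum, Icc_self, prod_singleton]
  ring

lemma sum_Ico_pred_mul_hlvl {a b : ℕ} (hab : a ≤ b) (hbq : b ≤ q) :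
    ∑ i ∈ Ico a b, ((k i : ℤ) - 1) * hlvl q k (i + 1) = hlvl q k a - hlvl q k b - (b - a) := by
  induction b, hab using Nat.le_induction with
  | base => simp
  | succ b hab ih =>
    rw [sum_Ico_succ_top hab, ih (by omega), hlvl_eq_one_add_mul q k (i := b) (by omega)]
    push_cast
    ring

end

theorem even_label_bounds_general (q : ℕ) (k : ℕ → ℕ) (hk : ∀ i, 1 ≤ k i)
    (r : ℕ) (hr : 2 ≤ r) (hrq : r ≤ q)
    (x : ℕ → ℕ) (hx : ∀ i ∈ Finset.Icc 1 (r - 1), x i ≤ k i - 1) :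
    0 < ((k 1 : ℤ) - x 1) * hlvl q k 2
        - ∑ i ∈ Finset.Icc 2 (r - 1), (x i : ℤ) * hlvl q k (i + 1)
        - ((r - 2 : ℕ) / 2 : ℕ) ∧
    ((k 1 : ℤ) - x 1) * hlvl q k 2
        - ∑ i ∈ Finset.Icc 2 (r - 1), (x i : ℤ) * hlvl q k (i + 1)
        - ((r - 2 : ℕ) / 2 : ℕ) ≤ (k 1 : ℤ) * hlvl q k 2 ∧
    k 1 * hlvl q k 2 = hlvl q k 1 - 1 := by
  have hx_le (i : ℕ) (hi : i ∈ Icc 1 (r - 1)) : (x i : ℤ) ≤ k i - 1 := by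
    have := hx i hi; have := hk i; omega
  have hx1 : (x 1 : ℤ) + 1 ≤ k 1 := by linarith [hx_le 1 (by simp; omega)]
  have hsum_le : ∑ i ∈ Icc 2 (r - 1), (x i : ℤ) * hlvl q k (i + 1)
      ≤ hlvl q k 2 - hlvl q k r - (r - 2) := by
    have htel := sum_Ico_pred_mul_hlvl q k hr hrq
    rw [← Icc_sub_one_right_eq_Ico_of_not_isMin (by simp; omega)] at htel
    calc _ ≤ ∑ i ∈ Icc 2 (r - 1), ((k i : ℤ) - 1) * hlvl q k (i + 1) := by
          gcongr with i hi
          exact hx_le i (by simp at hi ⊢; omega)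
      _ = _ := by rw [htel]; norm_num
  have hsum_nonneg : 0 ≤ ∑ i ∈ Icc 2 (r - 1), (x i : ℤ) * hlvl q k (i + 1) := by positivity
  have hhalf : (((r - 2) / 2 : ℕ) : ℤ) ≤ r - 2 := by
    have := Nat.div_le_self (r - 2) 2; omega
  have hh2 : (hlvl q k 2 : ℤ) ≤ (k 1 - x 1) * hlvl q k 2 := by
    nlinarith [one_le_hlvl q k 2]
  refine ⟨?_, ?_, ?_⟩
  · linarith [one_le_hlvl q k r]
  · nlinarith [one_le_hlvl q k 2]
  · rw [hlvl_eq_one_add_mul q k (by omega : 1 < q), Nat.add_sub_cancel_left]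

/-- For even `r` with `2 ≤ r ≤ q` and any admissible sequence, the even-level
label `(k 1 - x 1) h 2 - x 2 h 3 - ⋯ - x_{r-1} h r - (r-2)/2` is strictly
positive and at most `k 1 * h 2 = h 1 - 1`. -/
theorem even_label_bounds (q : ℕ) (k : ℕ → ℕ) (hk : ∀ i, 1 ≤ k i)
    (r : ℕ) (heven : Even r) (hr : 2 ≤ r) (hrq : r ≤ q)
    (x : ℕ → ℕ) (hx : ∀ i ∈ Finset.Icc 1 (r - 1), x i ≤ k i - 1) :
    0 < ((k 1 : ℤ) - x 1) * hlvl q k 2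
        - ∑ i ∈ Finset.Icc 2 (r - 1), (x i : ℤ) * hlvl q k (i + 1)
        - ((r - 2 : ℕ) / 2 : ℕ) ∧
    ((k 1 : ℤ) - x 1) * hlvl q k 2
        - ∑ i ∈ Finset.Icc 2 (r - 1), (x i : ℤ) * hlvl q k (i + 1)
        - ((r - 2 : ℕ) / 2 : ℕ) ≤ (k 1 : ℤ) * hlvl q k 2 ∧
    k 1 * hlvl q k 2 = hlvl q k 1 - 1 :=
  even_label_bounds_general q k hk r hr hrq x hx
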